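/- arXiv:1708.01374 — 5 statements merged into one kernel-verified Lean document; each statement's English description precedes it below -/
import Mathlib

section
/- The ideal p = ker(φ) where φ: k[[x₁,x₂,x₃]] → k[[t]] sends x₁ ↦ t^{n₁}, x₂ ↦ t^{n₂}, x₃ ↦ t^{n₃} with n_i = 2q+1+(i-1)m and gcd(2q+1,m)=1, is generated by g₁ = x₁^{m+q}x₂ - x₃^{q+1}, g₂ = x₁^{m+q+1} - x₂x₃^q, and g₃ = x₂² - x₁x₃ (the 2×2 minors of the matrix with rows (x₁, x₂, x₃^q) and (x₂, x₃, x₁^{m+q})). -/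
open MvPowerSeries Finsupp
noncomputable section
namespace S0
variable {k : Type*} [Field k]
def E (a b c : ℕ) : Fin 3 →₀ ℕ := single 0 a + single 1 b + single 2 c
@[simp] lemma E0 (a b c : ℕ) : E a b c 0 = a := by simp [E, Finsupp.single_apply]
@[simp] lemma E1 (a b c : ℕ) : E a b c 1 = b := by simp [E, Finsupp.single_apply]
@[simp] lemma E2 (a b c : ℕ) : E a b c 2 = c := by simp [E, Finsupp.single_apply]
lemma E_add (a b c a' b' c' : ℕ) : E a b c + E a' b' c' = E (a+a') (b+b') (c+c') := by
  ext i; fin_cases i <;> simp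
lemma E_eta (α : Fin 3 →₀ ℕ) : E (α 0) (α 1) (α 2) = α := by
  ext i; fin_cases i <;> simp
def wt (q m : ℕ) (α : Fin 3 →₀ ℕ) : ℕ := (2*q+1) * (α 0 + α 1 + α 2) + m * (α 1 + 2 * α 2)
lemma Xmul (k : Type*) [Field k] (a b c : ℕ) :
    (X 0 ^ a * X 1 ^ b * X 2 ^ c : MvPowerSeries (Fin 3) k) = monomial (E a b c) 1 := by
  rw [X_pow_eq, X_pow_eq, X_pow_eq, monomial_mul_monomial, monomial_mul_monomial, one_mul, one_mul]
  rfl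

def G (q m : ℕ) (k : Type*) [Field k] : Fin 3 → MvPowerSeries (Fin 3) k :=
  ![X 0 ^ (m + q) * X 1 - X 2 ^ (q + 1),
    X 0 ^ (m + q + 1) - X 1 * X 2 ^ q,
    X 1 ^ 2 - X 0 * X 2]

def μ (q m : ℕ) : Fin 3 → (Fin 3 →₀ ℕ) := ![E (m+q) 1 0, E (m+q+1) 0 0, E 0 2 0]
def ν (q m : ℕ) : Fin 3 → (Fin 3 →₀ ℕ) := ![E 0 0 (q+1), E 0 1 q, E 1 0 1]

lemma G_eq (q m : ℕ) (i : Fin 3) :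
    G q m k i = monomial (μ q m i) 1 - monomial (ν q m i) 1 := by
  fin_cases i
  · show X 0 ^ (m + q) * X 1 - X 2 ^ (q + 1) = monomial (E (m+q) 1 0) 1 - monomial (E 0 0 (q+1)) 1
    rw [← Xmul k (m+q) 1 0, ← Xmul k 0 0 (q+1)]; simp
  · show X 0 ^ (m + q + 1) - X 1 * X 2 ^ q = monomial (E (m+q+1) 0 0) 1 - monomial (E 0 1 q) 1
    rw [← Xmul k (m+q+1) 0 0, ← Xmul k 0 1 q]; simp
  · show X 1 ^ 2 - X 0 * X 2 = monomial (E 0 2 0) 1 - monomial (E 1 0 1) 1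
    rw [← Xmul k 0 2 0, ← Xmul k 1 0 1]; simp

def Wg (q m : ℕ) : Fin 3 → ℕ := ![(2*q+1)*(m+q+1) + m, (2*q+1)*(m+q+1), (2*q+1)*2 + m*2]

lemma wt_E (q m a b c : ℕ) : wt q m (E a b c) = (2*q+1)*(a+b+c) + m*(b+2*c) := by simp [wt]
lemma wt_add (q m : ℕ) (α β : Fin 3 →₀ ℕ) : wt q m (α + β) = wt q m α + wt q m β := by
  simp [wt]; ring

lemma wt_μ (q m : ℕ) (i : Fin 3) : wt q m (μ q m i) = Wg q m i := by
  fin_cases i <;> simp [μ, Wg, wt_E] <;> ring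
lemma wt_ν (q m : ℕ) (i : Fin 3) : wt q m (ν q m i) = Wg q m i := by
  fin_cases i <;> simp [ν, Wg, wt_E] <;> ring

lemma coeff_G_ne (q m : ℕ) (i : Fin 3) (δ : Fin 3 →₀ ℕ)
    (h : coeff δ (G q m k i) ≠ 0) : wt q m δ = Wg q m i := by
  rw [G_eq, map_sub] at h
  by_cases h1 : δ = μ q m i
  · rw [h1, wt_μ]
  by_cases h2 : δ = ν q m i
  · rw [h2, wt_ν]
  · rw [coeff_monomial_ne h1, coeff_monomial_ne h2] at h; simp at h

def Nor (q m : ℕ) (α : Fin 3 →₀ ℕ) : Prop := α 1 ≤ 1 ∧ α 0 + α 1 ≤ m + q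

lemma step (q m : ℕ) (i : Fin 3) (α'' : Fin 3 →₀ ℕ) :
    (monomial (α'' + μ q m i) 1 : MvPowerSeries (Fin 3) k)
      = monomial (α'' + ν q m i) 1 + monomial α'' 1 * G q m k i := by
  rw [G_eq, mul_sub, monomial_mul_monomial, monomial_mul_monomial, mul_one]
  ring

lemma build {q m : ℕ} (i : Fin 3) (α'' β : Fin 3 →₀ ℕ) (u' : Fin 3 → MvPowerSeries (Fin 3) k)
    (heq : (monomial (α'' + ν q m i) 1 : MvPowerSeries (Fin 3) k)
      = monomial β 1 + ∑ j, u' j * G q m k j)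
    (hhom : ∀ j γ, coeff γ (u' j) ≠ 0 → wt q m γ + Wg q m j = wt q m α'' + Wg q m i) :
    ∃ u : Fin 3 → MvPowerSeries (Fin 3) k,
      (monomial (α'' + μ q m i) 1 : MvPowerSeries (Fin 3) k)
          = monomial β 1 + ∑ j, u j * G q m k j ∧
      ∀ j γ, coeff γ (u j) ≠ 0 → wt q m γ + Wg q m j = wt q m α'' + Wg q m i := by
  classical
  refine ⟨fun j => u' j + (if j = i then monomial α'' 1 else 0), ?_, ?_⟩
  · have hsum : ∑ j, (u' j + (if j = i then monomial α'' 1 else 0)) * G q m k j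
        = (∑ j, u' j * G q m k j) + monomial α'' 1 * G q m k i := by
      rw [Finset.sum_congr rfl (fun j _ => add_mul _ _ _), Finset.sum_add_distrib]
      congr 1
      have : ∀ j, (if j = i then monomial α'' (1:k) else 0) * G q m k j
          = if j = i then monomial α'' 1 * G q m k i else 0 := by
        intro j; by_cases hj : j = i <;> simp [hj]
      rw [Finset.sum_congr rfl (fun j _ => this j), Finset.sum_ite_eq' Finset.univ i]
      simp
    rw [hsum, step q m i α'', heq]
    ring
  · intro j γ hc
    rw [map_add] at hc
    by_cases h1 : coeff γ (u' j) ≠ 0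
    · exact hhom j γ h1
    push_neg at h1
    rw [h1, zero_add] at hc
    by_cases hj : j = i
    · subst hj
      rw [if_pos rfl] at hc
      have : γ = α'' := by
        by_contra hne
        rw [coeff_monomial_ne hne] at hc; exact hc rfl
      subst this; rfl
    · rw [if_neg hj] at hc; simp at hc

lemma reduce (q m : ℕ) (hq : 1 ≤ q) (hm : 1 ≤ m) (α : Fin 3 →₀ ℕ) :
    ∃ (β : Fin 3 →₀ ℕ) (u : Fin 3 → MvPowerSeries (Fin 3) k),
      Nor q m β ∧ wt q m β = wt q m α ∧
      (monomial α 1 : MvPowerSeries (Fin 3) k)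
        = monomial β 1 + ∑ i, u i * G q m k i ∧
      ∀ i γ, coeff γ (u i) ≠ 0 → wt q m γ + Wg q m i = wt q m α := by
  generalize hn : α 0 + α 1 = n
  induction n using Nat.strong_induction_on generalizing α with
  | _ n IH =>
  by_cases hnor : α 1 ≤ 1 ∧ α 0 + α 1 ≤ m + q
  · exact ⟨α, fun _ => 0, hnor, rfl, by simp, by simp⟩
  obtain ⟨i, α'', hα, hlt⟩ : ∃ (i : Fin 3) (α'' : Fin 3 →₀ ℕ), α = α'' + μ q m i ∧
      (α'' + ν q m i) 0 + (α'' + ν q m i) 1 < n := by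
    by_cases hb : 2 ≤ α 1
    · refine ⟨2, E (α 0) (α 1 - 2) (α 2), ?_, ?_⟩
      · show α = E (α 0) (α 1 - 2) (α 2) + E 0 2 0
        rw [E_add]
        ext j; fin_cases j <;> simp <;> omega
      · show (E (α 0) (α 1 - 2) (α 2) + E 1 0 1) 0 + (E (α 0) (α 1 - 2) (α 2) + E 1 0 1) 1 < n
        rw [E_add]; simp; omega
    · by_cases hc : m + q + 1 ≤ α 0
      · refine ⟨1, E (α 0 - (m+q+1)) (α 1) (α 2), ?_, ?_⟩
        · show α = E (α 0 - (m+q+1)) (α 1) (α 2) + E (m+q+1) 0 0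
          rw [E_add]
          ext j; fin_cases j <;> simp <;> omega
        · show (E (α 0 - (m+q+1)) (α 1) (α 2) + E 0 1 q) 0
              + (E (α 0 - (m+q+1)) (α 1) (α 2) + E 0 1 q) 1 < n
          rw [E_add]; simp; omega
      · refine ⟨0, E 0 0 (α 2), ?_, ?_⟩
        · show α = E 0 0 (α 2) + E (m+q) 1 0
          rw [E_add]
          ext j; fin_cases j <;> simp <;> omega
        · show (E 0 0 (α 2) + E 0 0 (q+1)) 0 + (E 0 0 (α 2) + E 0 0 (q+1)) 1 < n
          rw [E_add]; simp; omega
  obtain ⟨β, u', h1, h2, h3, h4⟩ := IH _ hlt (α'' + ν q m i) rfl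
  have hw : wt q m (α'' + ν q m i) = wt q m α'' + Wg q m i := by rw [wt_add, wt_ν]
  obtain ⟨u, hu1, hu2⟩ := build i α'' β u' h3 (fun j γ h => by rw [← hw]; exact h4 j γ h)
  have hwα : wt q m α = wt q m α'' + Wg q m i := by rw [hα, wt_add, wt_μ]
  exact ⟨β, u, h1, by rw [h2, hw, ← hwα], by rw [hα]; exact hu1,
    fun i' γ h => by rw [hwα]; exact hu2 i' γ h⟩

lemma le_wt (q m : ℕ) (α : Fin 3 →₀ ℕ) : α 0 + α 1 + α 2 ≤ wt q m α := by
  have h : 1 * (α 0 + α 1 + α 2) ≤ (2*q+1) * (α 0 + α 1 + α 2) := by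
    apply Nat.mul_le_mul_right; omega
  simp only [wt]; omega

def A (q m e : ℕ) : Finset (Fin 3 →₀ ℕ) := (Finset.Iic (E e e e)).filter (fun α => wt q m α = e)

lemma mem_A {q m e : ℕ} {α : Fin 3 →₀ ℕ} : α ∈ A q m e ↔ wt q m α = e := by
  constructor
  · intro h; exact (Finset.mem_filter.mp h).2
  · intro h
    refine Finset.mem_filter.mpr ⟨Finset.mem_Iic.mpr ?_, h⟩
    rw [Finsupp.le_def]
    have hle := le_wt q m α
    rw [h] at hle
    intro i
    have h0 : α 0 ≤ e := by omega
    have h1 : α 1 ≤ e := by omega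
    have h2 : α 2 ≤ e := by omega
    fin_cases i
    · simpa using h0
    · simpa using h1
    · simpa using h2

def Mi (k : Type*) [Field k] : Ideal (MvPowerSeries (Fin 3) k) := Ideal.span {X 0, X 1, X 2}

lemma X_mem_Mi (i : Fin 3) : (X i : MvPowerSeries (Fin 3) k) ∈ Mi k := by
  apply Ideal.subset_span
  fin_cases i
  · left; rfl
  · right; left; rfl
  · right; right; rfl

lemma mem_pow (N : ℕ) (g : MvPowerSeries (Fin 3) k)
    (h : ∀ γ : Fin 3 →₀ ℕ, γ 0 + γ 1 + γ 2 < N → coeff γ g = 0) : g ∈ (Mi k) ^ N := by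
  classical
  induction N generalizing g with
  | zero => rw [pow_zero, Ideal.one_eq_top]; exact Submodule.mem_top
  | succ N IH =>
    obtain ⟨u0, hc0⟩ : ∃ u : MvPowerSeries (Fin 3) k,
        ∀ δ, coeff δ u = coeff (δ + single 0 1) g :=
      ⟨fun δ => coeff (δ + single 0 1) g, fun δ => rfl⟩
    obtain ⟨u1, hc1⟩ : ∃ u : MvPowerSeries (Fin 3) k,
        ∀ δ, coeff δ u = if δ 0 = 0 then coeff (δ + single 1 1) g else 0 :=
      ⟨fun δ => if δ 0 = 0 then coeff (δ + single 1 1) g else 0, fun δ => rfl⟩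
    obtain ⟨u2, hc2⟩ : ∃ u : MvPowerSeries (Fin 3) k,
        ∀ δ, coeff δ u = if δ 0 = 0 ∧ δ 1 = 0 then coeff (δ + single 2 1) g else 0 :=
      ⟨fun δ => if δ 0 = 0 ∧ δ 1 = 0 then coeff (δ + single 2 1) g else 0,
        fun δ => rfl⟩
    have hadd : ∀ (γ : Fin 3 →₀ ℕ) (i : Fin 3), 1 ≤ γ i → γ - single i 1 + single i 1 = γ :=
      fun γ i hi => tsub_add_cancel_of_le (Finsupp.single_le_iff.mpr hi)
    have hsumi : ∀ (γ : Fin 3 →₀ ℕ) (i : Fin 3),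
        ((γ + single i 1 : Fin 3 →₀ ℕ)) 0 + ((γ + single i 1 : Fin 3 →₀ ℕ)) 1
          + ((γ + single i 1 : Fin 3 →₀ ℕ)) 2 = γ 0 + γ 1 + γ 2 + 1 := by
      intro γ i
      rw [Finsupp.add_apply, Finsupp.add_apply, Finsupp.add_apply]
      fin_cases i <;> simp [Finsupp.single_apply] <;> omega
    have hsub : ∀ (γ : Fin 3 →₀ ℕ) (i j : Fin 3), i ≠ j →
        ((γ - single i 1 : Fin 3 →₀ ℕ)) j = γ j := by
      intro γ i j hij
      rw [Finsupp.tsub_apply, Finsupp.single_apply, if_neg hij, Nat.sub_zero]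
    have hg : g = X 0 * u0 + X 1 * u1 + X 2 * u2 := by
      ext γ
      rw [map_add, map_add, X_def, X_def, X_def,
        coeff_monomial_mul, coeff_monomial_mul, coeff_monomial_mul]
      simp only [one_mul, Finsupp.single_le_iff, hc0, hc1, hc2]
      rw [hsub γ 1 0 (by decide), hsub γ 2 0 (by decide), hsub γ 2 1 (by decide)]
      have T0 : (if 1 ≤ γ 0 then coeff (γ - single 0 1 + single 0 1) g else 0)
          = if 1 ≤ γ 0 then coeff γ g else 0 := by
        by_cases hx : 1 ≤ γ 0
        · rw [if_pos hx, if_pos hx, hadd γ 0 hx]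
        · rw [if_neg hx, if_neg hx]
      have T1 : (if 1 ≤ γ 1 then (if γ 0 = 0 then coeff (γ - single 1 1 + single 1 1) g else 0) else 0)
          = if 1 ≤ γ 1 then (if γ 0 = 0 then coeff γ g else 0) else 0 := by
        by_cases hx : 1 ≤ γ 1
        · rw [if_pos hx, if_pos hx, hadd γ 1 hx]
        · rw [if_neg hx, if_neg hx]
      have T2 : (if 1 ≤ γ 2 then (if γ 0 = 0 ∧ γ 1 = 0 then coeff (γ - single 2 1 + single 2 1) g else 0) else 0)
          = if 1 ≤ γ 2 then (if γ 0 = 0 ∧ γ 1 = 0 then coeff γ g else 0) else 0 := by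
        by_cases hx : 1 ≤ γ 2
        · rw [if_pos hx, if_pos hx, hadd γ 2 hx]
        · rw [if_neg hx, if_neg hx]
      rw [T0, T1, T2]
      by_cases h0 : γ 0 = 0 <;> by_cases h1 : γ 1 = 0 <;> by_cases h2 : γ 2 = 0
      · rw [h γ (by omega)]; simp [h0, h1, h2]
      all_goals simp [h0, h1, h2, Nat.one_le_iff_ne_zero]
    rw [hg, pow_succ]
    have m0 : u0 ∈ (Mi k) ^ N := by
      apply IH; intro γ hγ
      rw [hc0]; exact h _ (by rw [hsumi]; omega)
    have m1 : u1 ∈ (Mi k) ^ N := by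
      apply IH; intro γ hγ
      rw [hc1]; split_ifs with hi
      · exact h _ (by rw [hsumi]; omega)
      · rfl
    have m2 : u2 ∈ (Mi k) ^ N := by
      apply IH; intro γ hγ
      rw [hc2]; split_ifs with hi
      · exact h _ (by rw [hsumi]; omega)
      · rfl
    refine Submodule.add_mem _ (Submodule.add_mem _ ?_ ?_) ?_
    · rw [mul_comm (X 0) u0]; exact Ideal.mul_mem_mul m0 (X_mem_Mi 0)
    · rw [mul_comm (X 1) u1]; exact Ideal.mul_mem_mul m1 (X_mem_Mi 1)
    · rw [mul_comm (X 2) u2]; exact Ideal.mul_mem_mul m2 (X_mem_Mi 2)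

variable {q m : ℕ}

lemma coeff_phi_pow (φ : MvPowerSeries (Fin 3) k →ₐ[k] PowerSeries k)
    (hφ : ∀ i : Fin 3, φ (X i) = PowerSeries.X ^ (2 * q + 1 + i.val * m))
    (N : ℕ) (g : MvPowerSeries (Fin 3) k) (hg : g ∈ (Mi k) ^ N) (e : ℕ) (he : e < N) :
    PowerSeries.coeff e (φ g) = 0 := by
  have h1 : Ideal.map φ.toRingHom (Mi k) ≤ Ideal.span {(PowerSeries.X : PowerSeries k)} := by
    rw [Ideal.map_le_iff_le_comap, Mi, Ideal.span_le]
    rintro x hx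
    simp only [Set.mem_insert_iff, Set.mem_singleton_iff] at hx
    have key : ∀ i : Fin 3, (X i : MvPowerSeries (Fin 3) k) ∈
        Ideal.comap φ.toRingHom (Ideal.span {(PowerSeries.X : PowerSeries k)}) := by
      intro i
      rw [Ideal.mem_comap]
      show φ (X i) ∈ _
      rw [hφ i, Ideal.mem_span_singleton]
      exact dvd_pow_self _ (by omega)
    rcases hx with rfl | rfl | rfl
    exacts [key 0, key 1, key 2]
  have h2 : φ g ∈ Ideal.span {(PowerSeries.X : PowerSeries k)} ^ N := by
    have h3 : φ.toRingHom g ∈ Ideal.map φ.toRingHom ((Mi k) ^ N) := Ideal.mem_map_of_mem _ hg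
    rw [Ideal.map_pow] at h3
    exact Ideal.pow_right_mono h1 N h3
  rw [Ideal.span_singleton_pow, Ideal.mem_span_singleton] at h2
  exact PowerSeries.X_pow_dvd_iff.mp h2 e he

lemma phi_monomial (φ : MvPowerSeries (Fin 3) k →ₐ[k] PowerSeries k)
    (hφ : ∀ i : Fin 3, φ (X i) = PowerSeries.X ^ (2 * q + 1 + i.val * m))
    (α : Fin 3 →₀ ℕ) (c : k) :
    φ (monomial α c) = c • PowerSeries.X ^ (wt q m α) := by
  have h1 : (monomial α c : MvPowerSeries (Fin 3) k)
      = c • (X 0 ^ (α 0) * X 1 ^ (α 1) * X 2 ^ (α 2)) := by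
    rw [Xmul, E_eta, ← map_smul]
    simp
  rw [h1, map_smul, map_mul, map_mul, map_pow, map_pow, map_pow, hφ 0, hφ 1, hφ 2,
    ← pow_mul, ← pow_mul, ← pow_mul, ← pow_add, ← pow_add]
  congr 2
  show (2*q+1+(0:ℕ)*m) * α 0 + (2*q+1+(1:ℕ)*m) * α 1 + (2*q+1+(2:ℕ)*m) * α 2 = wt q m α
  simp only [wt]; ring

lemma coeff_phi (φ : MvPowerSeries (Fin 3) k →ₐ[k] PowerSeries k)
    (hφ : ∀ i : Fin 3, φ (X i) = PowerSeries.X ^ (2 * q + 1 + i.val * m))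
    (f : MvPowerSeries (Fin 3) k) (e : ℕ) :
    PowerSeries.coeff e (φ f) = ∑ α ∈ A q m e, coeff α f := by
  classical
  set T : MvPowerSeries (Fin 3) k
    := ∑ α ∈ Finset.Iic (E e e e), monomial α (coeff α f) with hTdef
  have hT : ∀ γ ∈ Finset.Iic (E e e e), coeff γ (f - T) = 0 := by
    intro γ hγ
    rw [map_sub, hTdef, map_sum, Finset.sum_eq_single γ]
    · rw [coeff_monomial_same, sub_self]
    · intro b _ hb; exact coeff_monomial_ne (Ne.symm hb) _
    · intro hγ'; exact absurd hγ hγ'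
  have hrem : f - T ∈ (Mi k) ^ (e+1) := by
    apply mem_pow
    intro γ hγ
    apply hT
    refine Finset.mem_Iic.mpr ?_
    rw [Finsupp.le_def]
    intro i
    have h0 : γ 0 ≤ e := by omega
    have h1 : γ 1 ≤ e := by omega
    have h2 : γ 2 ≤ e := by omega
    fin_cases i
    · simpa using h0
    · simpa using h1
    · simpa using h2
  have h1 : PowerSeries.coeff e (φ (f - T)) = 0 :=
    coeff_phi_pow φ hφ (e+1) _ hrem e (by omega)
  have h2 : φ f = φ T + φ (f - T) := by rw [← map_add]; congr 1; ring
  rw [h2, map_add, h1, add_zero, hTdef, map_sum, map_sum]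
  have h3 : ∀ α ∈ Finset.Iic (E e e e),
      PowerSeries.coeff e (φ (monomial α (coeff α f)))
        = if wt q m α = e then coeff α f else 0 := by
    intro α _
    rw [phi_monomial φ hφ, map_smul, PowerSeries.coeff_X_pow]
    by_cases hw : wt q m α = e
    · rw [if_pos hw, if_pos (by omega), smul_eq_mul, mul_one]
    · rw [if_neg hw, if_neg (by omega), smul_eq_mul, mul_zero]
  rw [Finset.sum_congr rfl h3, ← Finset.sum_filter]
  rfl

lemma unique_aux {q m a b c a' b' c' : ℕ} (hq : 1 ≤ q) (hm : 1 ≤ m)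
    (hgcd : Nat.gcd (2 * q + 1) m = 1)
    (hb : b ≤ 1) (hab : a + b ≤ m + q) (hb' : b' ≤ 1) (hab' : a' + b' ≤ m + q)
    (hw : (2*q+1)*(a+b+c) + m*(b+2*c) = (2*q+1)*(a'+b'+c') + m*(b'+2*c'))
    (hs : a'+b'+c' ≤ a+b+c) : a = a' ∧ b = b' ∧ c = c' := by
  -- p * u = m * v with u = s - s', v = d' - d
  set p := 2*q+1 with hp
  have hd : b + 2*c ≤ b' + 2*c' := by
    by_contra hcon
    have h1 : p*(a'+b'+c') ≤ p*(a+b+c) := Nat.mul_le_mul_left _ hs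
    have h2 : m*(b'+2*c') < m*(b+2*c) :=
      mul_lt_mul_of_pos_left (by omega) (by omega)
    omega
  obtain ⟨u, hu⟩ : ∃ u, a+b+c = (a'+b'+c') + u := ⟨_, (Nat.add_sub_cancel' hs).symm⟩
  obtain ⟨v, hv⟩ : ∃ v, b'+2*c' = (b+2*c) + v := ⟨_, (Nat.add_sub_cancel' hd).symm⟩
  have huv : p * u = m * v := by
    have e1 : p*(a+b+c) = p*(a'+b'+c') + p*u := by rw [hu]; ring
    have e2 : m*(b'+2*c') = m*(b+2*c) + m*v := by rw [hv]; ring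
    linarith [hw, e1, e2]
  have hmdvd : m ∣ u := by
    have h1 : m ∣ p * u := ⟨v, huv⟩
    have hcop : Nat.Coprime m p := (Nat.coprime_comm.mp hgcd)
    exact (Nat.Coprime.dvd_of_dvd_mul_left hcop h1)
  obtain ⟨w, hw1⟩ := hmdvd
  have hv1 : v = p * w := by
    have : m * (p * w) = m * v := by rw [← huv, hw1]; ring
    exact (Nat.eq_of_mul_eq_mul_left (by omega) this).symm
  -- case on w
  match w with
  | 0 => constructor <;> omega
  | 1 =>
    exfalso
    rw [hw1, Nat.mul_one] at hu
    rw [hv1, Nat.mul_one, hp] at hv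
    omega
  | (n+2) =>
    exfalso
    have e1 : m * (n+2) = m*n + 2*m := by ring
    have e2 : p * (n+2) = p*n + 2*p := by ring
    rw [hw1, e1] at hu
    rw [hv1, e2] at hv
    have h3 : 2*(a+b+c) ≤ 2*(m+q) + (b + 2*c) := by omega
    have h4 : b' + 2*c' ≤ 1 + 2*(a'+b'+c') := by omega
    have h5 : 0 ≤ m*n := Nat.zero_le _
    have h6 : 0 ≤ p*n := Nat.zero_le _
    have hp2 : p = 2*q+1 := hp
    linarith [hu, hv, h3, h4, h5, h6, hp2]

lemma nor_unique (hq : 1 ≤ q) (hm : 1 ≤ m) (hgcd : Nat.gcd (2*q+1) m = 1)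
    {α β : Fin 3 →₀ ℕ} (hα : Nor q m α) (hβ : Nor q m β)
    (h : wt q m α = wt q m β) : α = β := by
  obtain ⟨ha1, ha2⟩ := hα; obtain ⟨hb1, hb2⟩ := hβ
  simp only [wt] at h
  have main : α 0 = β 0 ∧ α 1 = β 1 ∧ α 2 = β 2 := by
    rcases le_total (β 0 + β 1 + β 2) (α 0 + α 1 + α 2) with hs | hs
    · exact unique_aux hq hm hgcd ha1 ha2 hb1 hb2 h hs
    · obtain ⟨x, y, z⟩ := unique_aux hq hm hgcd hb1 hb2 ha1 ha2 h.symm hs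
      exact ⟨x.symm, y.symm, z.symm⟩
  ext i; fin_cases i
  · exact main.1
  · exact main.2.1
  · exact main.2.2

end S0

open S0 in
/-- the kernel of `φ : k[[x₁,x₂,x₃]] → k[[t]]`, `xᵢ ↦ t^{2q+1+(i-1)m}`
(with `gcd(2q+1,m)=1`), is generated by `g₁ = x₁^{m+q}x₂ - x₃^{q+1}`,
`g₂ = x₁^{m+q+1} - x₂x₃^q` and `g₃ = x₂² - x₁x₃`
(here `X 0 = x₁`, `X 1 = x₂`, `X 2 = x₃`). -/
theorem stmt_0 {k : Type*} [Field k] (q m : ℕ) (hq : 1 ≤ q) (hm : 1 ≤ m)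
    (hgcd : Nat.gcd (2 * q + 1) m = 1)
    (φ : MvPowerSeries (Fin 3) k →ₐ[k] PowerSeries k)
    (hφ : ∀ i : Fin 3, φ (X i) = PowerSeries.X ^ (2 * q + 1 + i.val * m)) :
    RingHom.ker φ.toRingHom =
      Ideal.span {X 0 ^ (m + q) * X 1 - X 2 ^ (q + 1),
                  X 0 ^ (m + q + 1) - X 1 * X 2 ^ q,
                  (X 1 : MvPowerSeries (Fin 3) k) ^ 2 - X 0 * X 2} := by
  classical
  have hGset : ∀ i : Fin 3, G q m k i ∈
      ({X 0 ^ (m + q) * X 1 - X 2 ^ (q + 1), X 0 ^ (m + q + 1) - X 1 * X 2 ^ q,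
        (X 1 : MvPowerSeries (Fin 3) k) ^ 2 - X 0 * X 2} : Set (MvPowerSeries (Fin 3) k)) := by
    intro i; fin_cases i <;> simp [G]
  apply le_antisymm
  · -- ker ≤ span
    intro f hf
    have hf' : φ f = 0 := hf
    choose β u hnor hwt heq hhom using S0.reduce (k := k) q m hq hm
    obtain ⟨v, hv⟩ : ∃ v : Fin 3 → MvPowerSeries (Fin 3) k, ∀ i γ,
        coeff γ (v i) = ∑ α ∈ A q m (wt q m γ + Wg q m i),
          coeff α f * coeff γ (u α i) :=
      ⟨fun i γ => ∑ α ∈ A q m (wt q m γ + Wg q m i), coeff α f * coeff γ (u α i),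
        fun i γ => rfl⟩
    have hfeq : f = ∑ i, v i * G q m k i := by
      ext γ
      set e := wt q m γ with he
      have hzero : ∑ α ∈ A q m e, coeff α f = 0 := by
        rw [← coeff_phi φ hφ f e, hf', map_zero]
      have hP : (∑ α ∈ A q m e, coeff α f • (monomial α (1:k)))
          = ∑ i, (∑ α ∈ A q m e, coeff α f • u α i) * G q m k i := by
        rcases Finset.eq_empty_or_nonempty (A q m e) with hA | ⟨α₀, hα₀⟩
        · simp [hA]
        · have hβconst : ∀ α ∈ A q m e, β α = β α₀ := by
            intro α hα
            apply nor_unique hq hm hgcd (hnor α) (hnor α₀)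
            rw [hwt α, hwt α₀, mem_A.mp hα, mem_A.mp hα₀]
          calc (∑ α ∈ A q m e, coeff α f • (monomial α (1:k)))
              = ∑ α ∈ A q m e, (coeff α f • monomial (β α₀) (1:k)
                  + ∑ i, coeff α f • (u α i * G q m k i)) := by
                apply Finset.sum_congr rfl; intro α hα
                rw [← hβconst α hα, ← Finset.smul_sum, ← smul_add, ← heq α]
            _ = (∑ α ∈ A q m e, coeff α f) • monomial (β α₀) (1:k)
                  + ∑ i, (∑ α ∈ A q m e, coeff α f • u α i) * G q m k i := by
                rw [Finset.sum_add_distrib, ← Finset.sum_smul, Finset.sum_comm]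
                congr 1
                apply Finset.sum_congr rfl; intro i _
                rw [Finset.sum_mul]
                apply Finset.sum_congr rfl; intro α _
                rw [smul_mul_assoc]
            _ = _ := by rw [hzero, zero_smul, zero_add]
      have hcoeffP : coeff γ f
          = coeff γ (∑ α ∈ A q m e, coeff α f • (monomial α (1:k))) := by
        rw [map_sum, Finset.sum_eq_single γ]
        · rw [coeff_smul, coeff_monomial_same, mul_one]
        · intro b _ hb
          rw [coeff_smul, coeff_monomial_ne (Ne.symm hb), mul_zero]
        · intro hγ
          exact absurd (mem_A.mpr he.symm) hγ
      have hQv : ∀ i, coeff γ (v i * G q m k i)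
          = coeff γ ((∑ α ∈ A q m e, coeff α f • u α i) * G q m k i) := by
        intro i
        rw [coeff_mul, coeff_mul]
        apply Finset.sum_congr rfl
        rintro ⟨δ, δ'⟩ hmem
        rw [Finset.HasAntidiagonal.mem_antidiagonal] at hmem
        by_cases hG : coeff δ' (G q m k i) = 0
        · rw [hG, mul_zero, mul_zero]
        · have hwδ : wt q m δ + Wg q m i = e := by
            rw [← coeff_G_ne q m i δ' hG, ← wt_add, hmem]
          have h1 : coeff δ (v i) = ∑ α ∈ A q m e, coeff α f * coeff δ (u α i) := by
            rw [hv i δ, hwδ]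
          have h2 : coeff δ (∑ α ∈ A q m e, coeff α f • u α i)
              = ∑ α ∈ A q m e, coeff α f * coeff δ (u α i) := by
            rw [map_sum]
            exact Finset.sum_congr rfl (fun α _ => coeff_smul _ _ _)
          rw [h1, h2]
      rw [hcoeffP, hP, map_sum, map_sum]
      exact Finset.sum_congr rfl (fun i _ => (hQv i).symm)
    rw [hfeq]
    apply Ideal.sum_mem
    intro i _
    exact Ideal.mul_mem_left _ _ (Ideal.subset_span (hGset i))
  · -- span ≤ ker
    rw [Ideal.span_le]
    have h0 : φ (X 0) = PowerSeries.X ^ (2*q+1+0*m) := hφ 0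
    have h1 : φ (X 1) = PowerSeries.X ^ (2*q+1+1*m) := hφ 1
    have h2 : φ (X 2) = PowerSeries.X ^ (2*q+1+2*m) := hφ 2
    rintro g hg
    simp only [Set.mem_insert_iff, Set.mem_singleton_iff] at hg
    have mem_of : ∀ x : MvPowerSeries (Fin 3) k, φ x = 0 →
        x ∈ (RingHom.ker φ.toRingHom : Ideal (MvPowerSeries (Fin 3) k)) := by
      intro x hx
      rw [RingHom.mem_ker]
      exact hx
    rcases hg with rfl | rfl | rfl
    · apply mem_of
      rw [map_sub, map_mul, map_pow, map_pow, h0, h1, h2,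
        ← pow_mul, ← pow_mul, ← pow_add, sub_eq_zero]
      congr 1
      ring
    · apply mem_of
      rw [map_sub, map_mul, map_pow, map_pow, h0, h1, h2,
        ← pow_mul, ← pow_mul, ← pow_add, sub_eq_zero]
      congr 1
      ring
    · apply mem_of
      rw [map_sub, map_mul, map_pow, h0, h1, h2, ← pow_mul, ← pow_add, sub_eq_zero]
      congr 1
      ring
end
end

section
/- In R = k[[x₁,x₂,x₃]], the length of R/(x₁, x₂²-x₁x₃, f₂) equals the length of R/(x₁, x₂², x₃^{2q+1}), which equals 2(2q+1). -/
/-!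
Modulo `x₁`, the generator `f₁` becomes `x₂²`, and modulo `(x₁, x₂²)` the generator `f₂` becomes
`-x₃^{2q+1}` (every other term of `f₂` contains `x₁` or `x₂³`), so the two ideals coincide.
For a monomial ideal `(x₁^{d₁}, …, xₙ^{dₙ})` the coefficients at the standard monomials
`x^e` (`e < d`) identify the quotient with `k^{∏ dᵢ}` as a `k`-vector space. Since the residue
field of `k[[x₁,…,xₙ]]` is `k`, lengths over the power series ring are `k`-dimensions, which gives
`ℓ = 1 · 2 · (2q+1)`.
-/

noncomputable section
open MvPowerSeries

/-- The length of a module as the Krull dimension of its submodule lattice. -/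
def Module.length' (R M : Type*) [CommRing R] [AddCommGroup M] [Module R M] :
    WithBot ℕ∞ :=
  Order.krullDim (Submodule R M)

open IsLocalRing Module

theorem IsLocalRing.length_eq_of_residueField_surjective
    {A B M : Type*} [CommRing A] [CommRing B] [IsLocalRing A] [IsLocalRing B] [Algebra A B]
    [IsLocalHom (algebraMap A B)] [AddCommGroup M] [Module A M] [Module B M] [IsScalarTower A B M]
    (h : Function.Surjective (algebraMap (ResidueField A) (ResidueField B))) :
    length A M = length B M := by
  rw [IsLocalRing.length_restrictScalars A B M, Module.length_eq_of_surjective h,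
    Module.length_eq_one (ResidueField B) (ResidueField B), mul_one]

namespace MvPowerSeries

theorem algebraMap_residueField_surjective {σ k : Type*} [Field k] :
    Function.Surjective (algebraMap (ResidueField k) (ResidueField (MvPowerSeries σ k))) := by
  intro y
  obtain ⟨f, rfl⟩ := residue_surjective y
  refine ⟨residue k (constantCoeff f), ?_⟩
  rw [ResidueField.algebraMap_residue, ← sub_eq_zero, ← map_sub, residue_eq_zero_iff,
    mem_maximalIdeal, mem_nonunits_iff, isUnit_iff_constantCoeff]
  simp [algebraMap_apply]

variable {σ R : Type*} [CommSemiring R]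

theorem coeff_mul_X_pow' (e : σ →₀ ℕ) (f : MvPowerSeries σ R) (i : σ) (n : ℕ) :
    coeff e (f * X i ^ n) = if n ≤ e i then coeff (e - Finsupp.single i n) f else 0 := by
  simp only [X_pow_eq, coeff_mul_monomial, Finsupp.single_le_iff, mul_one]

theorem mem_span_range_X_pow_iff [Fintype σ] (d : σ → ℕ) {f : MvPowerSeries σ R} :
    f ∈ Ideal.span (Set.range fun i => (X i : MvPowerSeries σ R) ^ d i) ↔
      ∀ e : σ →₀ ℕ, (∀ i, e i < d i) → coeff e f = 0 := by
  classical
  rw [Ideal.mem_span_range_iff_exists_fun]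
  constructor
  · rintro ⟨c, rfl⟩ e he
    simp [coeff_mul_X_pow', (he _).not_ge]
  intro h
  rcases isEmpty_or_nonempty σ with hσ | hσ
  · exact ⟨0, ext fun e => by simpa using (h e isEmptyElim).symm⟩
  -- Each non-standard monomial is charged to a single variable whose generator divides it.
  let pivot (e : σ →₀ ℕ) : σ := Classical.epsilon fun i => d i ≤ e i
  let c (i : σ) : MvPowerSeries σ R := fun e =>
    if pivot (e + Finsupp.single i (d i)) = i then coeff (e + Finsupp.single i (d i)) f else 0
  refine ⟨c, ext fun e => ?_⟩
  rw [map_sum]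
  simp_rw [coeff_mul_X_pow']
  by_cases hstd : ∀ i, e i < d i
  · simp [(hstd _).not_ge, h e hstd]
  push Not at hstd
  have hpivot : d (pivot e) ≤ e (pivot e) := Classical.epsilon_spec hstd
  have hc (i : σ) (hi : d i ≤ e i) : coeff (e - Finsupp.single i (d i)) (c i) =
      if pivot e = i then coeff e f else 0 := by
    change ite _ _ _ = _
    rw [tsub_add_cancel_of_le (Finsupp.single_le_iff.2 hi)]
  rw [Finset.sum_eq_single (pivot e)]
  · rw [if_pos hpivot, hc _ hpivot, if_pos rfl]
  · intro i _ hi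
    split_ifs with hle
    · rw [hc i hle, if_neg hi.symm]
    · rfl
  · simp

section Field

variable {k : Type*} [Field k] [Fintype σ] (d : σ → ℕ)

def standardCoeffs : MvPowerSeries σ k →ₗ[k] ((∀ i, Fin (d i)) → k) :=
  LinearMap.pi fun p => coeff (Finsupp.equivFunOnFinite.symm fun i => (p i : ℕ))

theorem ker_standardCoeffs :
    LinearMap.ker (standardCoeffs (k := k) d) =
      (Ideal.span (Set.range fun i => (X i : MvPowerSeries σ k) ^ d i)).restrictScalars k := by
  ext f
  simp only [LinearMap.mem_ker, Submodule.restrictScalars_mem, mem_span_range_X_pow_iff]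
  constructor
  · intro hf e he
    simpa [standardCoeffs] using congrFun hf fun i => ⟨e i, he i⟩
  · intro hf
    funext p
    exact hf _ fun i => by simp

theorem standardCoeffs_surjective : Function.Surjective (standardCoeffs (k := k) d) := by
  intro c
  refine ⟨fun e => if h : ∀ i, e i < d i then c fun i => ⟨e i, h i⟩ else 0, funext fun p => ?_⟩
  change dite _ _ _ = _
  rw [dif_pos fun i => by simp]
  simp

def quotientSpanRangeXPowEquiv :
    (MvPowerSeries σ k ⧸ Ideal.span (Set.range fun i => (X i : MvPowerSeries σ k) ^ d i)) ≃ₗ[k]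
      ((∀ i, Fin (d i)) → k) :=
  (Submodule.Quotient.restrictScalarsEquiv k
      (Ideal.span (Set.range fun i => (X i : MvPowerSeries σ k) ^ d i))).symm ≪≫ₗ
    ((Submodule.quotEquivOfEq _ _ (ker_standardCoeffs (k := k) d).symm).trans
      ((standardCoeffs (k := k) d).quotKerEquivOfSurjective (standardCoeffs_surjective d)))

theorem length_quotient_span_range_X_pow :
    length (MvPowerSeries σ k)
      (MvPowerSeries σ k ⧸ Ideal.span (Set.range fun i => (X i : MvPowerSeries σ k) ^ d i)) =
      ∏ i, d i := by
  classical
  rw [← IsLocalRing.length_eq_of_residueField_surjective algebraMap_residueField_surjective,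
    (quotientSpanRangeXPowEquiv d).length_eq, length_eq_finrank,
    Module.finrank_fintype_fun_eq_card]
  simp

end Field

theorem length_quotient_span_X_pow_three {k : Type*} [Field k] (a b c : ℕ) :
    length (MvPowerSeries (Fin 3) k)
      (MvPowerSeries (Fin 3) k ⧸
        Ideal.span {X 0 ^ a, X 1 ^ b, (X 2 : MvPowerSeries (Fin 3) k) ^ c}) =
      (a * b * c : ℕ) := by
  have hrange : Set.range (fun i => (X i : MvPowerSeries (Fin 3) k) ^ ![a, b, c] i) =
      {X 0 ^ a, X 1 ^ b, X 2 ^ c} := by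
    ext f
    simp [Fin.exists_fin_succ, eq_comm]
  rw [← hrange, length_quotient_span_range_X_pow]
  simp [Fin.prod_univ_three]

end MvPowerSeries

theorem span_x_f₁_f₂_eq_span_x_y_sq_z_pow {R : Type*} [CommRing R] (x y z : R) {m q : ℕ}
    (hmq : 1 ≤ m + q) :
    Ideal.span {x, y ^ 2 - x * z, -x ^ (2 * (m + q) + 1) - x ^ (m + q - 1) * y ^ 3 * z ^ (q - 1)
        + 3 * x ^ (m + q) * y * z ^ q - z ^ (2 * q + 1)} =
      Ideal.span {x, y ^ 2, z ^ (2 * q + 1)} := by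
  obtain ⟨r, hr⟩ : ∃ r, m + q = r + 1 := ⟨m + q - 1, by omega⟩
  rw [hr, Nat.add_sub_cancel]
  apply le_antisymm <;>
    simp only [Ideal.span_le, Set.insert_subset_iff, Set.singleton_subset_iff, SetLike.mem_coe,
      Submodule.mem_span_triple, smul_eq_mul]
  · exact ⟨⟨1, 0, 0, by ring⟩, ⟨-z, 1, 0, by ring⟩,
      ⟨-x ^ (2 * r + 2) + 3 * x ^ r * y * z ^ q, -x ^ r * y * z ^ (q - 1), -1, by ring⟩⟩
  · exact ⟨⟨1, 0, 0, by ring⟩, ⟨z, 1, 0, by ring⟩,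
      ⟨-x ^ (2 * r + 2) + 3 * x ^ r * y * z ^ q - x ^ r * y * z ^ (q - 1) * z,
        -x ^ r * y * z ^ (q - 1), -1, by ring⟩⟩

theorem stmt_2_general {k : Type*} [Field k] (q m : ℕ) (hq : 1 ≤ q)
    (f₁ f₂ : MvPowerSeries (Fin 3) k)
    (hf₁ : f₁ = X 1 ^ 2 - X 0 * X 2)
    (hf₂ : f₂ = -X 0 ^ (2 * (m + q) + 1) - X 0 ^ (m + q - 1) * X 1 ^ 3 * X 2 ^ (q - 1)
        + 3 * X 0 ^ (m + q) * X 1 * X 2 ^ q - X 2 ^ (2 * q + 1)) :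
    Module.length' (MvPowerSeries (Fin 3) k)
        (MvPowerSeries (Fin 3) k ⧸ Ideal.span {X 0, f₁, f₂}) =
      Module.length' (MvPowerSeries (Fin 3) k)
        (MvPowerSeries (Fin 3) k ⧸
          Ideal.span {X 0, X 1 ^ 2, (X 2 : MvPowerSeries (Fin 3) k) ^ (2 * q + 1)}) ∧
    Module.length' (MvPowerSeries (Fin 3) k)
        (MvPowerSeries (Fin 3) k ⧸ Ideal.span {X 0, f₁, f₂}) =
      ((2 * (2 * q + 1) : ℕ) : WithBot ℕ∞) := by
  subst hf₁ hf₂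
  rw [span_x_f₁_f₂_eq_span_x_y_sq_z_pow _ _ _ (by omega)]
  refine ⟨rfl, ?_⟩
  have hlength := length_quotient_span_X_pow_three (k := k) 1 2 (2 * q + 1)
  rw [pow_one, one_mul] at hlength
  rw [Module.length', ← Module.coe_length, hlength]
  rfl

/-- in `R = k[[x₁,x₂,x₃]]` (with `X 0 = x₁`, `X 1 = x₂`, `X 2 = x₃`),
`ℓ(R/(x₁, x₂²-x₁x₃, f₂)) = ℓ(R/(x₁, x₂², x₃^{2q+1})) = 2(2q+1)`. -/
theorem stmt_2 {k : Type*} [Field k] (q m : ℕ) (hq : 1 ≤ q) (hm : 1 ≤ m)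
    (f₁ f₂ : MvPowerSeries (Fin 3) k)
    (hf₁ : f₁ = X 1 ^ 2 - X 0 * X 2)
    (hf₂ : f₂ = -X 0 ^ (2 * (m + q) + 1) - X 0 ^ (m + q - 1) * X 1 ^ 3 * X 2 ^ (q - 1)
        + 3 * X 0 ^ (m + q) * X 1 * X 2 ^ q - X 2 ^ (2 * q + 1)) :
    Module.length' (MvPowerSeries (Fin 3) k)
        (MvPowerSeries (Fin 3) k ⧸ Ideal.span {X 0, f₁, f₂}) =
      Module.length' (MvPowerSeries (Fin 3) k)
        (MvPowerSeries (Fin 3) k ⧸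
          Ideal.span {X 0, X 1 ^ 2, (X 2 : MvPowerSeries (Fin 3) k) ^ (2 * q + 1)}) ∧
    Module.length' (MvPowerSeries (Fin 3) k)
        (MvPowerSeries (Fin 3) k ⧸ Ideal.span {X 0, f₁, f₂}) =
      ((2 * (2 * q + 1) : ℕ) : WithBot ℕ∞) :=
  stmt_2_general q m hq f₁ f₂ hf₁ hf₂
end
end

section
/- Let T' = k[x₂,x₃], J₁ = (x₂², x₂x₃^q, x₃^{q+1}), J₂ = (x₃^{2q+1}), and I_n = Σ_{a₁+2a₂=n} J₁^{a₁}J₂^{a₂}. Then for all n ≥ 2, the colon ideal (I_n : x₂²) equals I_{n-1}. -/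
/-! `Iₙ` is the monomial ideal generated by the monomials `x₂^{2i+j} x₃^{qj+(q+1)l+(2q+1)m}` with
`i + j + l + 2m = n`, and the colon of a monomial ideal by a monomial `x^e` is generated by the
monomials `x^{s - e}` (truncated subtraction) for the generators `x^s`. So the theorem becomes a
comparison of exponent sets: `x₂²` times a generator of `I_{n-1}` is a generator of `Iₙ`, and
dividing a generator of `Iₙ` by `x₂²` (as far as possible) leaves a multiple of a generator of
`I_{n-1}`. -/

noncomputable section
open MvPolynomial

variable {k : Type*} [Field k]

/-- `J₁ = (x₂², x₂x₃^q, x₃^{q+1})` in `T' = k[x₂,x₃]` (variables `X 0 = x₂`, `X 1 = x₃`). -/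
def J1 (k : Type*) [Field k] (q : ℕ) : Ideal (MvPolynomial (Fin 2) k) :=
  Ideal.span {X 0 ^ 2, X 0 * X 1 ^ q, X 1 ^ (q + 1)}

/-- `J₂ = (x₃^{2q+1})`. -/
def J2 (k : Type*) [Field k] (q : ℕ) : Ideal (MvPolynomial (Fin 2) k) :=
  Ideal.span {X 1 ^ (2 * q + 1)}

/-- `Iₙ = Σ_{a₁+2a₂=n} J₁^{a₁} J₂^{a₂}` (so `I₀ = T'`). -/
def filtI (k : Type*) [Field k] (q n : ℕ) : Ideal (MvPolynomial (Fin 2) k) :=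
  ⨆ (a : ℕ × ℕ) (_ : a.1 + 2 * a.2 = n), J1 k q ^ a.1 * J2 k q ^ a.2

open scoped Pointwise

namespace MvPolynomial

variable {σ R : Type*} [CommSemiring R]

theorem span_monomial_image_mul_span_monomial_image (A B : Set (σ →₀ ℕ)) :
    Ideal.span ((fun s => monomial s (1 : R)) '' A) * Ideal.span ((fun s => monomial s 1) '' B) =
      Ideal.span ((fun s => monomial s 1) '' (A + B)) := by
  rw [Ideal.span_mul_span']
  congr 1
  ext f
  simp only [Set.mem_mul, Set.mem_image, Set.mem_add]
  constructor
  · rintro ⟨_, ⟨a, ha, rfl⟩, _, ⟨b, hb, rfl⟩, rfl⟩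
    exact ⟨a + b, ⟨a, ha, b, hb, rfl⟩, by rw [monomial_mul, one_mul]⟩
  · rintro ⟨_, ⟨a, ha, b, hb, rfl⟩, rfl⟩
    exact ⟨_, ⟨a, ha, rfl⟩, _, ⟨b, hb, rfl⟩, by rw [monomial_mul, one_mul]⟩

theorem span_monomial_image_le_span_monomial_image {S T : Set (σ →₀ ℕ)}
    (h : ∀ s ∈ S, ∃ t ∈ T, t ≤ s) :
    Ideal.span ((fun s => monomial s (1 : R)) '' S) ≤
      Ideal.span ((fun s => monomial s 1) '' T) := by
  rw [Ideal.span_le]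
  rintro _ ⟨s, hs, rfl⟩
  rw [SetLike.mem_coe, mem_ideal_span_monomial_image]
  intro d hd
  rw [Finset.mem_singleton.mp (support_monomial_subset hd)]
  exact h s hs

theorem colon_span_monomial_image (S : Set (σ →₀ ℕ)) (e : σ →₀ ℕ) :
    (Ideal.span ((fun s => monomial s (1 : R)) '' S)).colon
        (Ideal.span {monomial e (1 : R)} : Set (MvPolynomial σ R)) =
      Ideal.span ((fun s => monomial s 1) '' ((· - e) '' S)) := by
  ext f
  rw [Ideal.mem_colon_span_singleton, mem_ideal_span_monomial_image,
    mem_ideal_span_monomial_image]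
  simp_rw [Set.exists_mem_image]
  constructor
  · intro h d hd
    have hde : d + e ∈ (f * monomial e 1).support := by
      rwa [mem_support_iff, coeff_mul_monomial, mul_one, ← mem_support_iff]
    obtain ⟨s, hs, hle⟩ := h _ hde
    exact ⟨s, hs, tsub_le_iff_right.mpr hle⟩
  · intro h d hd
    rw [mem_support_iff, coeff_mul_monomial'] at hd
    split_ifs at hd with hed
    · rw [mul_one, ← mem_support_iff] at hd
      obtain ⟨s, hs, hle⟩ := h _ hd
      exact ⟨s, hs, (tsub_le_iff_right.mp hle).trans (tsub_add_cancel_of_le hed).le⟩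
    · exact absurd rfl hd

end MvPolynomial

def pairExp (a b : ℕ) : Fin 2 →₀ ℕ := Finsupp.single 0 a + Finsupp.single 1 b

theorem pairExp_add (a b c d : ℕ) : pairExp a b + pairExp c d = pairExp (a + c) (b + d) := by
  simp only [pairExp, Finsupp.single_add]
  abel

theorem pairExp_sub (a b c d : ℕ) : pairExp a b - pairExp c d = pairExp (a - c) (b - d) := by
  ext i
  fin_cases i <;> simp [pairExp]

theorem pairExp_le_pairExp {a b c d : ℕ} : pairExp a b ≤ pairExp c d ↔ a ≤ c ∧ b ≤ d := by
  refine ⟨fun h => ⟨by simpa [pairExp] using h 0, by simpa [pairExp] using h 1⟩, ?_⟩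
  rintro ⟨hac, hbd⟩ i
  fin_cases i <;> simpa [pairExp]

theorem monomial_pairExp (a b : ℕ) : monomial (pairExp a b) (1 : k) = X 0 ^ a * X 1 ^ b := by
  rw [X_pow_eq_monomial, X_pow_eq_monomial, monomial_mul, one_mul, pairExp]

/-- Exponents of the products `(x₂²)^i (x₂x₃^q)^j (x₃^{q+1})^l (x₃^{2q+1})^m` with
`i + j + l + 2m = n`. -/
def filtExponents (q n : ℕ) : Set (Fin 2 →₀ ℕ) :=
  {e | ∃ i j l m : ℕ, i + j + l + 2 * m = n ∧
    e = pairExp (2 * i + j) (q * j + (q + 1) * l + (2 * q + 1) * m)}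

theorem J1_eq_span_monomial_image (q : ℕ) :
    J1 k q = Ideal.span ((fun s => monomial s (1 : k)) ''
      {pairExp 2 0, pairExp 1 q, pairExp 0 (q + 1)}) := by
  simp only [J1, Set.image_insert_eq, Set.image_singleton, monomial_pairExp, pow_zero, mul_one,
    one_mul, pow_one]

theorem J1_mul_span_filtExponents_le (q n : ℕ) :
    J1 k q * Ideal.span ((fun s => monomial s (1 : k)) '' filtExponents q n) ≤
      Ideal.span ((fun s => monomial s 1) '' filtExponents q (n + 1)) := by
  rw [J1_eq_span_monomial_image, span_monomial_image_mul_span_monomial_image]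
  refine Ideal.span_mono (Set.image_mono (Set.add_subset_iff.mpr ?_))
  rintro a ha _ ⟨i, j, l, m, hsum, rfl⟩
  simp only [Set.mem_insert_iff, Set.mem_singleton_iff] at ha
  rcases ha with rfl | rfl | rfl
  · exact ⟨i + 1, j, l, m, by omega, by rw [pairExp_add]; congr 1 <;> ring⟩
  · exact ⟨i, j + 1, l, m, by omega, by rw [pairExp_add]; congr 1 <;> ring⟩
  · exact ⟨i, j, l + 1, m, by omega, by rw [pairExp_add]; congr 1 <;> ring⟩

theorem J2_pow_le_span_filtExponents (q b : ℕ) :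
    J2 k q ^ b ≤ Ideal.span ((fun s => monomial s (1 : k)) '' filtExponents q (2 * b)) := by
  rw [J2, Ideal.span_singleton_pow, ← pow_mul, Ideal.span_le, Set.singleton_subset_iff]
  refine Ideal.subset_span ⟨pairExp 0 ((2 * q + 1) * b), ⟨0, 0, 0, b, by ring, by simp⟩, ?_⟩
  show monomial _ 1 = _
  rw [monomial_pairExp, pow_zero, one_mul]

theorem J1_pow_mul_J2_pow_le_span_filtExponents (q a b : ℕ) :
    J1 k q ^ a * J2 k q ^ b ≤
      Ideal.span ((fun s => monomial s (1 : k)) '' filtExponents q (a + 2 * b)) := by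
  induction a with
  | zero => simpa using J2_pow_le_span_filtExponents q b
  | succ a ih =>
    calc J1 k q ^ (a + 1) * J2 k q ^ b = J1 k q * (J1 k q ^ a * J2 k q ^ b) := by ring
      _ ≤ _ := (Ideal.mul_mono_right ih).trans (J1_mul_span_filtExponents_le q _)
      _ = _ := by rw [add_right_comm]

theorem span_filtExponents_le_filtI (q n : ℕ) :
    Ideal.span ((fun s => monomial s (1 : k)) '' filtExponents q n) ≤ filtI k q n := by
  rw [Ideal.span_le]
  rintro _ ⟨_, ⟨i, j, l, m, hsum, rfl⟩, rfl⟩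
  have hJ1 (x : MvPolynomial (Fin 2) k) (hx : x ∈ ({X 0 ^ 2, X 0 * X 1 ^ q, X 1 ^ (q + 1)} :
      Set _)) : x ∈ J1 k q := Ideal.subset_span hx
  have hJ2 : X 1 ^ (2 * q + 1) ∈ J2 k q := Ideal.mem_span_singleton_self _
  refine (le_iSup₂_of_le (i + j + l, m) hsum le_rfl : J1 k q ^ (i + j + l) * J2 k q ^ m ≤ _) ?_
  dsimp only
  rw [show monomial (pairExp (2 * i + j) (q * j + (q + 1) * l + (2 * q + 1) * m)) (1 : k) =
      (X 0 ^ 2) ^ i * (X 0 * X 1 ^ q) ^ j * (X 1 ^ (q + 1)) ^ l * (X 1 ^ (2 * q + 1)) ^ m by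
    rw [monomial_pairExp]; ring, pow_add, pow_add]
  exact Ideal.mul_mem_mul (Ideal.mul_mem_mul (Ideal.mul_mem_mul
    (Ideal.pow_mem_pow (hJ1 _ (by simp)) i) (Ideal.pow_mem_pow (hJ1 _ (by simp)) j))
    (Ideal.pow_mem_pow (hJ1 _ (by simp)) l)) (Ideal.pow_mem_pow hJ2 m)

theorem filtI_eq_span_filtExponents (q n : ℕ) :
    filtI k q n = Ideal.span ((fun s => monomial s (1 : k)) '' filtExponents q n) := by
  refine le_antisymm (iSup₂_le fun a ha => ?_) (span_filtExponents_le_filtI q n)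
  rw [← ha]
  exact J1_pow_mul_J2_pow_le_span_filtExponents q a.1 a.2

/-- Drop a factor `x₂²`, else trade `(x₂x₃^q)²` for `x₃^{q+1}`, else drop a single `J₁`-factor,
else replace `x₃^{2q+1}` by `x₃^{q+1}`. -/
theorem exists_filtExponents_le_sub {q n i j l m : ℕ} (hq : 1 ≤ q) (h : i + j + l + 2 * m = n) :
    ∃ i' j' l' m' : ℕ, i' + j' + l' + 2 * m' = n - 1 ∧ 2 * i' + j' ≤ 2 * i + j - 2 ∧
      q * j' + (q + 1) * l' + (2 * q + 1) * m' ≤ q * j + (q + 1) * l + (2 * q + 1) * m := by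
  subst h
  match i, j, l, m with
  | i + 1, j, l, m => exact ⟨i, j, l, m, by omega, by omega, le_rfl⟩
  | 0, j + 2, l, m => exact ⟨0, j, l + 1, m, by omega, by omega, by nlinarith⟩
  | 0, 1, l, m => exact ⟨0, 0, l, m, by omega, by omega, by nlinarith⟩
  | 0, 0, l + 1, m => exact ⟨0, 0, l, m, by omega, by omega, by nlinarith⟩
  | 0, 0, 0, m + 1 => exact ⟨0, 0, 1, m, by omega, by omega, by nlinarith⟩
  | 0, 0, 0, 0 => exact ⟨0, 0, 0, 0, rfl, le_rfl, le_rfl⟩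

theorem exists_mem_filtExponents_pred_le_sub {q n : ℕ} (hq : 1 ≤ q) {s : Fin 2 →₀ ℕ}
    (hs : s ∈ filtExponents q n) : ∃ t ∈ filtExponents q (n - 1), t ≤ s - pairExp 2 0 := by
  obtain ⟨i, j, l, m, hsum, rfl⟩ := hs
  obtain ⟨i', j', l', m', hsum', h₂, h₃⟩ := exists_filtExponents_le_sub hq hsum
  refine ⟨_, ⟨i', j', l', m', hsum', rfl⟩, ?_⟩
  rw [pairExp_sub, pairExp_le_pairExp]
  omega

theorem exists_mem_filtExponents_sub_le {q n : ℕ} {t : Fin 2 →₀ ℕ}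
    (ht : t ∈ filtExponents q (n - 1)) : ∃ s ∈ filtExponents q n, s - pairExp 2 0 ≤ t := by
  obtain _ | n := n
  · exact ⟨t, ht, tsub_le_self⟩
  obtain ⟨i, j, l, m, hsum, rfl⟩ := ht
  refine ⟨_, ⟨i + 1, j, l, m, by omega, rfl⟩, ?_⟩
  rw [pairExp_sub, pairExp_le_pairExp]
  omega

theorem stmt_3_general (q : ℕ) (hq : 1 ≤ q) (n : ℕ) :
    (filtI k q n).colon ((Ideal.span {X 0 ^ 2} : Ideal (MvPolynomial (Fin 2) k)) : Set (MvPolynomial (Fin 2) k)) = filtI k q (n - 1) := by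
  have hX : (X 0 ^ 2 : MvPolynomial (Fin 2) k) = monomial (pairExp 2 0) 1 := by
    rw [monomial_pairExp, pow_zero, mul_one]
  rw [hX, filtI_eq_span_filtExponents, filtI_eq_span_filtExponents, colon_span_monomial_image]
  exact le_antisymm
    (span_monomial_image_le_span_monomial_image <| Set.forall_mem_image.mpr fun _ hs =>
      exists_mem_filtExponents_pred_le_sub hq hs)
    (span_monomial_image_le_span_monomial_image fun _ ht =>
      Set.exists_mem_image.mpr (exists_mem_filtExponents_sub_le ht))

/-- for all n ≥ 2, the colon ideal (Iₙ : x₂²) equals I_{n-1}. -/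
theorem stmt_3 (q : ℕ) (hq : 1 ≤ q) (n : ℕ) (hn : 2 ≤ n) :
    (filtI k q n).colon ((Ideal.span {X 0 ^ 2} : Ideal (MvPolynomial (Fin 2) k)) : Set (MvPolynomial (Fin 2) k)) = filtI k q (n - 1) :=
  stmt_3_general q hq n
end
end

section
/- With I_n = Σ_{a₁+2a₂=n} J₁^{a₁}J₂^{a₂} in k[x₂,x₃], for all n ≥ 1 one has ((I_{n+2} + x₂²I_{n+1}) : x₃^{2q+1}) = I_n + x₂²I_{n-1}. -/
/-!
Every ideal involved is a monomial ideal: `Iₙ` is spanned by the monomials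
`x₂^{2i+j} x₃^{qj+(q+1)l+(2q+1)b}` with `i + j + l + 2b = n`. As `x₂² ∈ J₁`, the summand
`x₂² I_{m-1}` lies in `I_m`, so the claim reads `(I_{n+2} : x₃^{2q+1}) = Iₙ`. The colon of a
monomial ideal by a monomial is again monomial, computed on exponents, and the equality of
exponent sets follows from the fact that every generator of `I_{n+2}` is either `x₃^{2q+1}`
times a multiple of a generator of `Iₙ` or a multiple of `x₂^{2n} ∈ Iₙ`.
-/

noncomputable section
open MvPolynomial

variable {k : Type*} [Field k]

open Pointwise

namespace MvPolynomial

variable {σ : Type*} (R : Type*) [CommSemiring R]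

def monomialIdeal (S : Set (σ →₀ ℕ)) : Ideal (MvPolynomial σ R) :=
  Ideal.span ((fun s => monomial s 1) '' S)

variable {R}

theorem mem_monomialIdeal {S : Set (σ →₀ ℕ)} {p : MvPolynomial σ R} :
    p ∈ monomialIdeal R S ↔ ↑p.support ⊆ (upperClosure S : Set (σ →₀ ℕ)) := by
  simp only [monomialIdeal, mem_ideal_span_monomial_image, Set.subset_def,
    SetLike.mem_coe, mem_upperClosure]

theorem monomial_mem_monomialIdeal {S : Set (σ →₀ ℕ)} {s : σ →₀ ℕ} (hs : s ∈ S) :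
    monomial s 1 ∈ monomialIdeal R S :=
  Ideal.subset_span ⟨s, hs, rfl⟩

theorem monomialIdeal_mono {S T : Set (σ →₀ ℕ)} (h : S ⊆ T) :
    monomialIdeal R S ≤ monomialIdeal R T :=
  Ideal.span_mono (Set.image_mono h)

theorem monomialIdeal_mul (S T : Set (σ →₀ ℕ)) :
    monomialIdeal R S * monomialIdeal R T = monomialIdeal R (S + T) := by
  rw [monomialIdeal, monomialIdeal, monomialIdeal, Ideal.span_mul_span', ← Set.image2_mul,
    ← Set.image2_add, Set.image2_image_left, Set.image2_image_right, Set.image_image2]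
  simp only [monomial_mul, mul_one]

theorem support_mul_monomial_one (p : MvPolynomial σ R) (t : σ →₀ ℕ) :
    (p * monomial t 1).support = p.support.map (addRightEmbedding t) :=
  AddMonoidAlgebra.support_coeff_mul_single p 1 (by simp) t

theorem colon_monomial_eq_monomialIdeal {S T : Set (σ →₀ ℕ)} {t : σ →₀ ℕ}
    (h : (· + t) ⁻¹' (upperClosure S : Set (σ →₀ ℕ)) = upperClosure T) :
    (monomialIdeal R S).colon (Ideal.span {monomial t (1 : R)} : Set (MvPolynomial σ R)) =
      monomialIdeal R T := by
  classical
  ext p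
  rw [Ideal.mem_colon_span_singleton, mem_monomialIdeal, mem_monomialIdeal,
    support_mul_monomial_one, Finset.coe_map, Set.image_subset_iff, ← h]
  rfl

end MvPolynomial

def bidegree (a b : ℕ) : Fin 2 →₀ ℕ := Finsupp.single 0 a + Finsupp.single 1 b

@[simp] theorem bidegree_apply_zero (a b : ℕ) : bidegree a b 0 = a := by simp [bidegree]
@[simp] theorem bidegree_apply_one (a b : ℕ) : bidegree a b 1 = b := by simp [bidegree]

theorem bidegree_add_bidegree (a b c d : ℕ) :
    bidegree a b + bidegree c d = bidegree (a + c) (b + d) := by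
  ext i; fin_cases i <;> simp

theorem bidegree_le_iff {a b : ℕ} {d : Fin 2 →₀ ℕ} : bidegree a b ≤ d ↔ a ≤ d 0 ∧ b ≤ d 1 := by
  rw [Finsupp.le_def, Fin.forall_fin_two, bidegree_apply_zero, bidegree_apply_one]

theorem monomial_bidegree (a b : ℕ) :
    monomial (bidegree a b) (1 : k) = X 0 ^ a * X 1 ^ b := by
  rw [X_pow_eq_monomial, X_pow_eq_monomial, monomial_mul, one_mul, bidegree]

/-- Exponents of the monomial generators `(x₂²)^i (x₂x₃^q)^j (x₃^{q+1})^l (x₃^{2q+1})^b` of `Iₙ`. -/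
def filtExps (q n : ℕ) : Set (Fin 2 →₀ ℕ) :=
  {s | ∃ i j l b, i + j + l + 2 * b = n ∧
    bidegree (2 * i + j) (q * j + (q + 1) * l + (2 * q + 1) * b) = s}

section Filtration

variable {q : ℕ}

theorem X_pow_mul_X_pow_mem_monomialIdeal_filtExps {n i j l b : ℕ}
    (h : i + j + l + 2 * b = n) :
    (X 0 ^ (2 * i + j) * X 1 ^ (q * j + (q + 1) * l + (2 * q + 1) * b) :
      MvPolynomial (Fin 2) k) ∈ monomialIdeal k (filtExps q n) := by
  rw [← monomial_bidegree]
  exact monomial_mem_monomialIdeal ⟨i, j, l, b, h, rfl⟩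

theorem filtExps_add_subset (m m' : ℕ) : filtExps q m + filtExps q m' ⊆ filtExps q (m + m') := by
  rintro _ ⟨_, ⟨i, j, l, b, rfl, rfl⟩, _, ⟨i', j', l', b', rfl, rfl⟩, rfl⟩
  refine ⟨i + i', j + j', l + l', b + b', by ring, ?_⟩
  dsimp only
  rw [bidegree_add_bidegree]
  congr 1 <;> ring

theorem monomialIdeal_filtExps_mul_le (m m' : ℕ) :
    monomialIdeal k (filtExps q m) * monomialIdeal k (filtExps q m') ≤
      monomialIdeal k (filtExps q (m + m')) := by
  rw [monomialIdeal_mul]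
  exact monomialIdeal_mono (filtExps_add_subset m m')

theorem pow_le_monomialIdeal_filtExps {I : Ideal (MvPolynomial (Fin 2) k)} {m : ℕ}
    (hI : I ≤ monomialIdeal k (filtExps q m)) (a : ℕ) :
    I ^ a ≤ monomialIdeal k (filtExps q (m * a)) := by
  induction a with
  | zero =>
    have h := X_pow_mul_X_pow_mem_monomialIdeal_filtExps (k := k) (q := q)
      (show 0 + 0 + 0 + 2 * 0 = m * 0 by ring)
    simp only [mul_zero, add_zero, pow_zero, one_mul] at h
    rwa [pow_zero, Ideal.one_eq_top, top_le_iff, Ideal.eq_top_iff_one]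
  | succ a ih =>
    rw [pow_succ, mul_add, mul_one]
    exact (Ideal.mul_mono ih hI).trans (monomialIdeal_filtExps_mul_le _ _)

theorem J1_le_monomialIdeal_filtExps : J1 k q ≤ monomialIdeal k (filtExps q 1) := by
  have h₁ := X_pow_mul_X_pow_mem_monomialIdeal_filtExps (k := k) (q := q)
    (show 1 + 0 + 0 + 2 * 0 = 1 by rfl)
  have h₂ := X_pow_mul_X_pow_mem_monomialIdeal_filtExps (k := k) (q := q)
    (show 0 + 1 + 0 + 2 * 0 = 1 by rfl)
  have h₃ := X_pow_mul_X_pow_mem_monomialIdeal_filtExps (k := k) (q := q)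
    (show 0 + 0 + 1 + 2 * 0 = 1 by rfl)
  simp only [mul_zero, mul_one, zero_add, add_zero, pow_zero, pow_one, one_mul] at h₁ h₂ h₃
  rw [J1, Ideal.span_le, Set.insert_subset_iff, Set.insert_subset_iff, Set.singleton_subset_iff]
  exact ⟨h₁, h₂, h₃⟩

theorem J2_le_monomialIdeal_filtExps : J2 k q ≤ monomialIdeal k (filtExps q 2) := by
  have h := X_pow_mul_X_pow_mem_monomialIdeal_filtExps (k := k) (q := q)
    (show 0 + 0 + 0 + 2 * 1 = 2 by rfl)
  simp only [mul_zero, mul_one, zero_add, pow_zero, one_mul] at h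
  rwa [J2, Ideal.span_le, Set.singleton_subset_iff]

theorem filtI_le_monomialIdeal (n : ℕ) : filtI k q n ≤ monomialIdeal k (filtExps q n) := by
  refine iSup₂_le fun a ha => ?_
  calc J1 k q ^ a.1 * J2 k q ^ a.2
      ≤ monomialIdeal k (filtExps q (1 * a.1)) * monomialIdeal k (filtExps q (2 * a.2)) :=
        Ideal.mul_mono (pow_le_monomialIdeal_filtExps J1_le_monomialIdeal_filtExps a.1)
          (pow_le_monomialIdeal_filtExps J2_le_monomialIdeal_filtExps a.2)
    _ ≤ monomialIdeal k (filtExps q n) := by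
        simpa only [one_mul, ha] using
          monomialIdeal_filtExps_mul_le (k := k) (q := q) a.1 (2 * a.2)

theorem J1_pow_mul_J2_pow_le_filtI (a b : ℕ) : J1 k q ^ a * J2 k q ^ b ≤ filtI k q (a + 2 * b) :=
  le_iSup₂ (f := fun (c : ℕ × ℕ) (_ : c.1 + 2 * c.2 = a + 2 * b) => J1 k q ^ c.1 * J2 k q ^ c.2)
    (a, b) rfl

theorem monomialIdeal_le_filtI (n : ℕ) : monomialIdeal k (filtExps q n) ≤ filtI k q n := by
  rw [monomialIdeal, Ideal.span_le]
  rintro _ ⟨_, ⟨i, j, l, b, h, rfl⟩, rfl⟩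
  have hJ1 : ∀ x ∈ ({X 0 ^ 2, X 0 * X 1 ^ q, X 1 ^ (q + 1)} : Set (MvPolynomial (Fin 2) k)),
      x ∈ J1 k q := fun x hx => Ideal.subset_span hx
  have hJ2 : X 1 ^ (2 * q + 1) ∈ J2 k q := Ideal.mem_span_singleton_self _
  dsimp only
  rw [SetLike.mem_coe, monomial_bidegree, ← h]
  refine J1_pow_mul_J2_pow_le_filtI (i + j + l) b ?_
  rw [show (X 0 ^ (2 * i + j) * X 1 ^ (q * j + (q + 1) * l + (2 * q + 1) * b) :
      MvPolynomial (Fin 2) k) = (X 0 ^ 2) ^ i * (X 0 * X 1 ^ q) ^ j * (X 1 ^ (q + 1)) ^ l *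
        (X 1 ^ (2 * q + 1)) ^ b by ring, pow_add, pow_add]
  exact Ideal.mul_mem_mul (Ideal.mul_mem_mul (Ideal.mul_mem_mul
    (Ideal.pow_mem_pow (hJ1 _ (by simp)) i) (Ideal.pow_mem_pow (hJ1 _ (by simp)) j))
    (Ideal.pow_mem_pow (hJ1 _ (by simp)) l)) (Ideal.pow_mem_pow hJ2 b)

theorem filtI_eq_monomialIdeal (n : ℕ) : filtI k q n = monomialIdeal k (filtExps q n) :=
  (filtI_le_monomialIdeal n).antisymm (monomialIdeal_le_filtI n)

theorem span_X_zero_sq_mul_filtI_le (m : ℕ) :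
    Ideal.span {X 0 ^ 2} * filtI k q m ≤ filtI k q (m + 1) := by
  have hX : Ideal.span {X 0 ^ 2} ≤ J1 k q := Ideal.span_mono (by simp)
  rw [add_comm, filtI_eq_monomialIdeal (1 + m)]
  exact (Ideal.mul_mono (hX.trans J1_le_monomialIdeal_filtExps) (filtI_le_monomialIdeal m)).trans
    (monomialIdeal_filtExps_mul_le 1 m)

theorem filtI_sup_span_X_zero_sq_mul_filtI_sub_one (n : ℕ) :
    filtI k q n ⊔ Ideal.span {X 0 ^ 2} * filtI k q (n - 1) = filtI k q n := by
  refine sup_eq_left.2 ?_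
  rcases n with _ | m
  · have h₀ : filtI k q 0 = ⊤ := by simpa using J1_pow_mul_J2_pow_le_filtI (k := k) (q := q) 0 0
    simp [h₀]
  · exact span_X_zero_sq_mul_filtI_le m

/-- `x₃^{2q+1}` is split off a generator of `I_{n+2}` using a factor `x₃^{2q+1}`, or
`x₂x₃^q · x₃^{q+1} = x₃^{2q+1}`, or `x₃^{2q+1} ∣ (x₃^{q+1})²`, or (as `q ≥ 1`)
`x₂² x₃^{2q+1} ∣ (x₂x₃^q)³`. A generator admitting none of these has `b = 0`, `l ≤ 1`, `j ≤ 2`,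
`j = 0` if `l = 1`, hence `i ≥ n`. -/
theorem filtExps_add_two_reduce (hq : 1 ≤ q) {n i j l b : ℕ} (h : i + j + l + 2 * b = n + 2) :
    (∃ i' j' l' b', i' + j' + l' + 2 * b' = n ∧ 2 * i' + j' ≤ 2 * i + j ∧
      q * j' + (q + 1) * l' + (2 * q + 1) * b' + (2 * q + 1) ≤
        q * j + (q + 1) * l + (2 * q + 1) * b) ∨
    2 * n ≤ 2 * i + j := by
  rcases b with _ | b
  · rcases l with _ | _ | l
    · by_cases hj : j ≤ 2
      · right; omega
      · left
        obtain ⟨j, rfl⟩ : ∃ j', j = j' + 3 := ⟨j - 3, by omega⟩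
        exact ⟨i + 1, j, 0, 0, by omega, by omega, by nlinarith⟩
    · rcases j with _ | j
      · right; omega
      · left; exact ⟨i, j, 0, 0, by omega, by omega, by linarith⟩
    · left; exact ⟨i, j, l, 0, by omega, by omega, by linarith⟩
  · left; exact ⟨i, j, l, b, by omega, le_rfl, by linarith⟩

theorem preimage_upperClosure_filtExps (hq : 1 ≤ q) (n : ℕ) :
    (· + Finsupp.single 1 (2 * q + 1)) ⁻¹'
        (upperClosure (filtExps q (n + 2)) : Set (Fin 2 →₀ ℕ)) = upperClosure (filtExps q n) := by
  ext d
  simp only [Set.mem_preimage, SetLike.mem_coe, mem_upperClosure]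
  constructor
  · rintro ⟨_, ⟨i, j, l, b, h, rfl⟩, hle⟩
    simp only [bidegree_le_iff, Finsupp.add_apply, Finsupp.single_eq_same,
      Finsupp.single_eq_of_ne Fin.zero_ne_one, add_zero] at hle
    rcases filtExps_add_two_reduce hq h with ⟨i', j', l', b', h', h₀, h₁⟩ | h₀
    · exact ⟨_, ⟨i', j', l', b', h', rfl⟩, bidegree_le_iff.2 ⟨by omega, by omega⟩⟩
    · exact ⟨_, ⟨n, 0, 0, 0, by ring, rfl⟩, bidegree_le_iff.2 ⟨by omega, by simp⟩⟩
  · rintro ⟨_, ⟨i, j, l, b, h, rfl⟩, hle⟩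
    rw [bidegree_le_iff] at hle
    refine ⟨_, ⟨i, j, l, b + 1, by omega, rfl⟩, bidegree_le_iff.2 ?_⟩
    simp only [Finsupp.add_apply, Finsupp.single_eq_same,
      Finsupp.single_eq_of_ne Fin.zero_ne_one, add_zero]
    constructor <;> linarith

theorem filtI_add_two_colon (hq : 1 ≤ q) (n : ℕ) :
    (filtI k q (n + 2)).colon
        ((Ideal.span {X 1 ^ (2 * q + 1)} : Ideal (MvPolynomial (Fin 2) k)) :
          Set (MvPolynomial (Fin 2) k)) = filtI k q n := by
  rw [filtI_eq_monomialIdeal, filtI_eq_monomialIdeal, X_pow_eq_monomial]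
  exact colon_monomial_eq_monomialIdeal (preimage_upperClosure_filtExps hq n)

end Filtration

theorem stmt_5_general (q : ℕ) (hq : 1 ≤ q) (n : ℕ) :
    (filtI k q (n + 2) ⊔ Ideal.span {X 0 ^ 2} * filtI k q (n + 1)).colon
        ((Ideal.span {X 1 ^ (2 * q + 1)} : Ideal (MvPolynomial (Fin 2) k)) :
          Set (MvPolynomial (Fin 2) k)) =
      filtI k q n ⊔ Ideal.span {X 0 ^ 2} * filtI k q (n - 1) := by
  rw [sup_eq_left.2 (span_X_zero_sq_mul_filtI_le (n + 1)),
    filtI_sup_span_X_zero_sq_mul_filtI_sub_one]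
  exact filtI_add_two_colon hq n

/-- for all n ≥ 1,
((I_{n+2} + x₂²I_{n+1}) : x₃^{2q+1}) = Iₙ + x₂²I_{n-1}. -/
theorem stmt_5 (q : ℕ) (hq : 1 ≤ q) (n : ℕ) (hn : 1 ≤ n) :
    (filtI k q (n + 2) ⊔ Ideal.span {X 0 ^ 2} * filtI k q (n + 1)).colon
        ((Ideal.span {X 1 ^ (2 * q + 1)} : Ideal (MvPolynomial (Fin 2) k)) :
          Set (MvPolynomial (Fin 2) k)) =
      filtI k q n ⊔ Ideal.span {X 0 ^ 2} * filtI k q (n - 1) :=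
  stmt_5_general q hq n
end
end

section
/- The element f₂ = -x₁^{2(m+q)+1} - x₁^{m+q-1}x₂³x₃^{q-1} + 3x₁^{m+q}x₂x₃^q - x₃^{2q+1} belongs to the second symbolic power p^{(2)} of the defining prime p of the monomial curve (t^{2q+1}, t^{2q+1+m}, t^{2q+1+2m}), but its product with x₃ lies in p². -/
/-!
Under `xᵢ ↦ t^{2q+1+(i-1)m}` the binomials `g = x₁x₃ - x₂²`, `g' = x₃^{q+1} - x₁^{m+q}x₂` and
`h = x₂x₃^q - x₁^{m+q+1}` map to `0`, so they lie in `p`, and `x₃ f₂ = -g'² + x₁^{m+q-1} h g`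
lies in `p²`. Since `x₃ ∉ p` is a unit in `R_p`, this already gives `f₂ ∈ p²R_p ∩ R = p⁽²⁾`.
-/

noncomputable section
open MvPowerSeries

/-- The `n`-th symbolic power `p⁽ⁿ⁾ = pⁿR_p ∩ R` of a prime ideal `p`. -/
def Ideal.symbolicPower {R : Type*} [CommRing R] (p : Ideal R) (hp : p.IsPrime)
    (n : ℕ) : Ideal R :=
  haveI := hp
  ((p ^ n).map (algebraMap R (Localization.AtPrime p))).comap
    (algebraMap R (Localization.AtPrime p))

theorem Ideal.mem_symbolicPower_of_mul_mem {R : Type*} [CommRing R] {p : Ideal R}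
    (hp : p.IsPrime) {n : ℕ} {s f : R} (hs : s ∉ p) (h : s * f ∈ p ^ n) :
    f ∈ p.symbolicPower hp n := by
  have := hp
  have hunit : IsUnit (algebraMap R (Localization.AtPrime p) s) :=
    IsLocalization.map_units _ (⟨s, hs⟩ : p.primeCompl)
  have hmap := Ideal.mem_map_of_mem (algebraMap R (Localization.AtPrime p)) h
  rwa [map_mul, Ideal.unit_mul_mem_iff_mem _ hunit] at hmap

theorem mul_mem_sq_of_curve_binomials_mem {R : Type*} [CommRing R] {I : Ideal R} {q : ℕ}
    (m : ℕ) (hq : 1 ≤ q) {x₁ x₂ x₃ : R} (hg : x₁ * x₃ - x₂ ^ 2 ∈ I)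
    (hg' : x₃ ^ (q + 1) - x₁ ^ (m + q) * x₂ ∈ I) (hh : x₂ * x₃ ^ q - x₁ ^ (m + q + 1) ∈ I) :
    x₃ * (-x₁ ^ (2 * (m + q) + 1) - x₁ ^ (m + q - 1) * x₂ ^ 3 * x₃ ^ (q - 1)
        + 3 * x₁ ^ (m + q) * x₂ * x₃ ^ q - x₃ ^ (2 * q + 1)) ∈ I ^ 2 := by
  obtain ⟨q, rfl⟩ := Nat.exists_eq_add_of_le' hq
  have hmem : -(x₃ ^ (q + 1 + 1) - x₁ ^ (m + (q + 1)) * x₂) ^ 2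
      + x₁ ^ (m + q) * (x₂ * x₃ ^ (q + 1) - x₁ ^ (m + (q + 1) + 1)) * (x₁ * x₃ - x₂ ^ 2) ∈ I ^ 2 :=
    add_mem (neg_mem (Ideal.pow_mem_pow hg' 2))
      (sq I ▸ Ideal.mul_mem_mul (Ideal.mul_mem_left _ _ hh) hg)
  convert hmem using 1
  rw [Nat.add_sub_cancel, ← add_assoc, Nat.add_sub_cancel]
  ring

theorem stmt_14_general {k : Type*} [Field k] (q m : ℕ) (hq : 1 ≤ q)
    (φ : MvPowerSeries (Fin 3) k →ₐ[k] PowerSeries k)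
    (hφ : ∀ i : Fin 3, φ (X i) = PowerSeries.X ^ (2 * q + 1 + i.val * m))
    (p : Ideal (MvPowerSeries (Fin 3) k)) (hpdef : p = RingHom.ker φ.toRingHom)
    (hp : p.IsPrime)
    (f₂ : MvPowerSeries (Fin 3) k)
    (hf₂ : f₂ = -X 0 ^ (2 * (m + q) + 1) - X 0 ^ (m + q - 1) * X 1 ^ 3 * X 2 ^ (q - 1)
        + 3 * X 0 ^ (m + q) * X 1 * X 2 ^ q - X 2 ^ (2 * q + 1)) :
    f₂ ∈ p.symbolicPower hp 2 ∧ X 2 * f₂ ∈ p ^ 2 := by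
  have hker {a b : MvPowerSeries (Fin 3) k} (h : φ a = φ b) : a - b ∈ p :=
    hpdef ▸ RingHom.sub_mem_ker_iff _ |>.mpr h
  have hx₃ : (X 2 : MvPowerSeries (Fin 3) k) ∉ p := by
    rw [hpdef, RingHom.mem_ker]
    exact (hφ 2).trans_ne (pow_ne_zero _ PowerSeries.X_ne_zero)
  have hmem : X 2 * f₂ ∈ p ^ 2 := by
    rw [hf₂]
    refine mul_mem_sq_of_curve_binomials_mem m hq (hker ?_) (hker ?_) (hker ?_) <;>
      simp only [map_mul, map_pow, hφ, Fin.val_zero, Fin.val_one, Fin.val_two] <;> ring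
  exact ⟨p.mem_symbolicPower_of_mul_mem hp hx₃ hmem, hmem⟩

/-- with `p = ker(xᵢ ↦ t^{2q+1+(i-1)m})` the defining prime of the
monomial curve `(t^{2q+1}, t^{2q+1+m}, t^{2q+1+2m})` in `R = k[[x₁,x₂,x₃]]`
(here `X 0 = x₁`, `X 1 = x₂`, `X 2 = x₃`), the element `f₂` belongs to the
second symbolic power `p⁽²⁾`, and `x₃·f₂ ∈ p²`. -/
theorem stmt_14 {k : Type*} [Field k] (q m : ℕ) (hq : 1 ≤ q) (hm : 1 ≤ m)
    (hgcd : Nat.gcd (2 * q + 1) m = 1)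
    (φ : MvPowerSeries (Fin 3) k →ₐ[k] PowerSeries k)
    (hφ : ∀ i : Fin 3, φ (X i) = PowerSeries.X ^ (2 * q + 1 + i.val * m))
    (p : Ideal (MvPowerSeries (Fin 3) k)) (hpdef : p = RingHom.ker φ.toRingHom)
    (hp : p.IsPrime)
    (f₂ : MvPowerSeries (Fin 3) k)
    (hf₂ : f₂ = -X 0 ^ (2 * (m + q) + 1) - X 0 ^ (m + q - 1) * X 1 ^ 3 * X 2 ^ (q - 1)
        + 3 * X 0 ^ (m + q) * X 1 * X 2 ^ q - X 2 ^ (2 * q + 1)) :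
    f₂ ∈ p.symbolicPower hp 2 ∧ X 2 * f₂ ∈ p ^ 2 :=
  stmt_14_general q m hq φ hφ p hpdef hp f₂ hf₂
end
end
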